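/- arXiv:2105.00024 — 7 statements merged into one kernel-verified Lean document; each statement's English description precedes it below -/
import Mathlib

section
/- For a polynomial monad M, define the indexed inductive family Tree : (Σ (i : Idx M), Cns M i) → Type with constructors lf : (i : Idx M) → Tree (i, η M i) and nd : (c : Cns M i) → (δ : (p : Pos M c) → Cns M (Typ M c p)) → (ε : (p : Pos M c) → Tree (Typ M c p, δ p)) → Tree (i, μ M c δ). Then the grafting operation γ : Tree (i, c) → (φ : (p : Pos M c) → Cns M (Typ M c p)) → (ψ : (p : Pos M c) → Tree (Typ M c p, φ p)) → Tree (i, μ M c φ), defined by γ (lf i) φ ψ = ψ (unit position) and γ (nd c δ ε) φ ψ = nd c (λ p, μ M (δ p) (φ restricted to p)) (λ p, γ (ε p) ...), is well-typed and satisfies right unitality: grafting leaves onto a tree σ : Tree (i, c) yields σ, i.e., γ σ (λ p, η M (Typ M c p)) (λ p, lf (Typ M c p)) = σ. -/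
/-- A cartesian polynomial monad: an indexed container equipped with unit `eta`,
multiplication `mu`, position pairing/projections witnessing the cartesian
equivalences `Pos (eta i) ≃ Unit` and `Pos (mu c δ) ≃ Σ p, Pos (δ p)`,
compatible typing rules, and the monad laws. -/
structure PM where
  Idx : Type
  Cns : Idx → Type
  Pos : {i : Idx} → Cns i → Type
  Typ : {i : Idx} → (c : Cns i) → Pos c → Idx
  eta : (i : Idx) → Cns i
  mu : {i : Idx} → (c : Cns i) → ((p : Pos c) → Cns (Typ c p)) → Cns i
  etaPos : (i : Idx) → Pos (eta i)
  etaTyp : ∀ (i : Idx) (p : Pos (eta i)), Typ (eta i) p = i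
  etaPosUnique : ∀ (i : Idx) (p : Pos (eta i)), p = etaPos i
  muPos : ∀ {i : Idx} (c : Cns i) (δ : (p : Pos c) → Cns (Typ c p))
    (p : Pos c), Pos (δ p) → Pos (mu c δ)
  muFst : ∀ {i : Idx} (c : Cns i) (δ : (p : Pos c) → Cns (Typ c p)),
    Pos (mu c δ) → Pos c
  muSnd : ∀ {i : Idx} (c : Cns i) (δ : (p : Pos c) → Cns (Typ c p))
    (p : Pos (mu c δ)), Pos (δ (muFst c δ p))
  muTyp : ∀ {i : Idx} (c : Cns i) (δ : (p : Pos c) → Cns (Typ c p))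
    (p : Pos (mu c δ)), Typ (mu c δ) p = Typ (δ (muFst c δ p)) (muSnd c δ p)
  muFstBeta : ∀ {i : Idx} (c : Cns i) (δ : (p : Pos c) → Cns (Typ c p))
    (p : Pos c) (q : Pos (δ p)), muFst c δ (muPos c δ p q) = p
  muSndBeta : ∀ {i : Idx} (c : Cns i) (δ : (p : Pos c) → Cns (Typ c p))
    (p : Pos c) (q : Pos (δ p)), HEq (muSnd c δ (muPos c δ p q)) q
  muPosEta : ∀ {i : Idx} (c : Cns i) (δ : (p : Pos c) → Cns (Typ c p))
    (p : Pos (mu c δ)), muPos c δ (muFst c δ p) (muSnd c δ p) = p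
  unitR : ∀ {i : Idx} (c : Cns i), mu c (fun p => eta (Typ c p)) = c
  unitL : ∀ (i : Idx) (δ : (p : Pos (eta i)) → Cns (Typ (eta i) p)),
    HEq (mu (eta i) δ) (δ (etaPos i))
  assoc : ∀ {i : Idx} (c : Cns i) (δ : (p : Pos c) → Cns (Typ c p))
    (ε : (p : Pos (mu c δ)) → Cns (Typ (mu c δ) p))
    (h : ∀ (p : Pos c) (q : Pos (δ p)), Typ (mu c δ) (muPos c δ p q) = Typ (δ p) q),
    mu (mu c δ) ε =
      mu c (fun p => mu (δ p) (fun q => cast (congrArg Cns (h p q)) (ε (muPos c δ p q))))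

/-- The typing of a paired position of a multiplication. -/
theorem PM.muPosTyp (M : PM) {i : M.Idx} (c : M.Cns i)
    (δ : (p : M.Pos c) → M.Cns (M.Typ c p)) (p : M.Pos c) (q : M.Pos (δ p)) :
    M.Typ (M.mu c δ) (M.muPos c δ p q) = M.Typ (δ p) q := by
  have h1 := M.muTyp c δ (M.muPos c δ p q)
  have h2 := M.muFstBeta c δ p q
  have h3 := M.muSndBeta c δ p q
  rw [h1]
  congr 1
  · rw [h2]
  · rw [h2]

/-- Transporting a constructor along an equality of indices, as an equality of pairs. -/
theorem PM.castSigma (M : PM) {i j : M.Idx} (h : i = j) (c : M.Cns i) :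
    (⟨i, c⟩ : Σ k : M.Idx, M.Cns k) = ⟨j, cast (congrArg M.Cns h) c⟩ := by
  subst h; rfl

/-- Constructors of the slice monad `Slice M`: trees generated by the
constructors of `M`, indexed by their iterated multiplication. -/
inductive STree (M : PM) : (Σ i : M.Idx, M.Cns i) → Type where
  | lf : (i : M.Idx) → STree M ⟨i, M.eta i⟩
  | nd : {i : M.Idx} → (c : M.Cns i) → (δ : (p : M.Pos c) → M.Cns (M.Typ c p)) →
      (ε : (p : M.Pos c) → STree M ⟨M.Typ c p, δ p⟩) → STree M ⟨i, M.mu c δ⟩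

/-- Positions (internal nodes) of a tree: a leaf has no positions, a node has
its root (`here`) together with a position of the base constructor and,
recursively, a node of the tree attached there (`there`).  (This inductive
family is equivalent to `Pos (lf i) = Empty`,
`Pos (nd c δ ε) = Unit ⊕ Σ p, Pos (ε p)`.) -/
inductive TreePos (M : PM) : ∀ {ic : Σ i : M.Idx, M.Cns i}, STree M ic → Type where
  | here : {i : M.Idx} → {c : M.Cns i} → {δ : (p : M.Pos c) → M.Cns (M.Typ c p)} →
      {ε : (p : M.Pos c) → STree M ⟨M.Typ c p, δ p⟩} → TreePos M (STree.nd c δ ε)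
  | there : {i : M.Idx} → {c : M.Cns i} → {δ : (p : M.Pos c) → M.Cns (M.Typ c p)} →
      {ε : (p : M.Pos c) → STree M ⟨M.Typ c p, δ p⟩} →
      (p : M.Pos c) → TreePos M (ε p) → TreePos M (STree.nd c δ ε)

/-- Typing of the slice monad: project the constructor occurring at a node. -/
def TreeTyp (M : PM) : ∀ {ic : Σ i : M.Idx, M.Cns i} {σ : STree M ic},
    TreePos M σ → Σ i : M.Idx, M.Cns i
  | _, _, .here (i := i) (c := c) => ⟨i, c⟩
  | _, _, .there p q => TreeTyp M q

/-- The corolla on a constructor `c`: a single node with all leaves. -/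
def corolla (M : PM) {i : M.Idx} (c : M.Cns i) :
    STree M ⟨i, M.mu c (fun p => M.eta (M.Typ c p))⟩ :=
  STree.nd c (fun p => M.eta (M.Typ c p)) (fun p => STree.lf (M.Typ c p))

/-- The unit of the slice monad: the corolla, transported along right unitality. -/
def sliceEta (M : PM) (ic : Σ i : M.Idx, M.Cns i) : STree M ic :=
  cast (congrArg (STree M) (congrArg (Sigma.mk ic.1) (M.unitR ic.2))) (corolla M ic.2)

/-- The grafting operation on trees, characterized by its recursion equations. -/
structure Graft (M : PM) where
  γ : ∀ {i : M.Idx} (c : M.Cns i), STree M ⟨i, c⟩ →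
    ∀ (φ : (p : M.Pos c) → M.Cns (M.Typ c p)),
      ((p : M.Pos c) → STree M ⟨M.Typ c p, φ p⟩) → STree M ⟨i, M.mu c φ⟩
  lf_rule : ∀ (i : M.Idx) (φ : (p : M.Pos (M.eta i)) → M.Cns (M.Typ (M.eta i) p))
    (ψ : (p : M.Pos (M.eta i)) → STree M ⟨M.Typ (M.eta i) p, φ p⟩),
    HEq (γ (M.eta i) (STree.lf i) φ ψ) (ψ (M.etaPos i))
  nd_rule : ∀ {i : M.Idx} (c : M.Cns i) (δ : (p : M.Pos c) → M.Cns (M.Typ c p))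
    (ε : (p : M.Pos c) → STree M ⟨M.Typ c p, δ p⟩)
    (φ : (p : M.Pos (M.mu c δ)) → M.Cns (M.Typ (M.mu c δ) p))
    (ψ : (p : M.Pos (M.mu c δ)) → STree M ⟨M.Typ (M.mu c δ) p, φ p⟩),
    HEq (γ (M.mu c δ) (STree.nd c δ ε) φ ψ)
      (STree.nd c
        (fun p => M.mu (δ p)
          (fun q => cast (congrArg M.Cns (M.muPosTyp c δ p q)) (φ (M.muPos c δ p q))))
        (fun p => γ (δ p) (ε p)
          (fun q => cast (congrArg M.Cns (M.muPosTyp c δ p q)) (φ (M.muPos c δ p q)))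
          (fun q => cast (congrArg (STree M)
              (M.castSigma (M.muPosTyp c δ p q) (φ (M.muPos c δ p q))))
            (ψ (M.muPos c δ p q)))))

/-- The multiplication (substitution) of the slice monad, characterized by its
recursion equations, together with a grafting operation. -/
structure SliceOps (M : PM) extends Graft M where
  smu : ∀ {ic : Σ i : M.Idx, M.Cns i} (σ : STree M ic),
    ((p : TreePos M σ) → STree M (TreeTyp M p)) → STree M ic
  smu_lf : ∀ (i : M.Idx)
    (φ : (p : TreePos M (STree.lf (M := M) i)) → STree M (TreeTyp M p)),
    smu (STree.lf i) φ = STree.lf i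
  smu_nd : ∀ {i : M.Idx} (c : M.Cns i) (δ : (p : M.Pos c) → M.Cns (M.Typ c p))
    (ε : (p : M.Pos c) → STree M ⟨M.Typ c p, δ p⟩)
    (φ : (p : TreePos M (STree.nd c δ ε)) → STree M (TreeTyp M p)),
    smu (STree.nd c δ ε) φ =
      γ c (φ TreePos.here) δ
        (fun p => smu (ε p) (fun q => φ (TreePos.there p q)))

section Aux
variable (M : PM)

theorem sigmaMkEq {A : Type} {B : A → Type} {a a' : A} {b : B a} {b' : B a'}
    (h : a = a') (h2 : HEq b b') : (⟨a, b⟩ : Σ x, B x) = ⟨a', b'⟩ := by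
  subst h; cases h2; rfl

theorem castEta {a b : M.Idx} (h : a = b) :
    cast (congrArg M.Cns h) (M.eta a) = M.eta b := by subst h; rfl

theorem lfHEq {a b : M.Idx} (h : a = b) :
    HEq (STree.lf (M := M) a) (STree.lf (M := M) b) := by subst h; rfl

/-- The sigma-equality used in the leaf case of grafting. -/
theorem lfCastEq (i : M.Idx)
    (φ : (p : M.Pos (M.eta i)) → M.Cns (M.Typ (M.eta i) p)) :
    (⟨M.Typ (M.eta i) (M.etaPos i), φ (M.etaPos i)⟩ : Σ j, M.Cns j)
      = ⟨i, M.mu (M.eta i) φ⟩ :=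
  sigmaMkEq (M.etaTyp i (M.etaPos i)) (M.unitL i φ).symm

theorem ndHEq {i : M.Idx} (c : M.Cns i)
    {δ1 δ2 : (p : M.Pos c) → M.Cns (M.Typ c p)} (h : δ1 = δ2)
    (ε1 : (p : M.Pos c) → STree M ⟨M.Typ c p, δ1 p⟩)
    (ε2 : (p : M.Pos c) → STree M ⟨M.Typ c p, δ2 p⟩)
    (he : ∀ p, HEq (ε1 p) (ε2 p)) :
    HEq (STree.nd c δ1 ε1) (STree.nd c δ2 ε2) := by
  subst h
  have : ε1 = ε2 := funext fun p => eq_of_heq (he p)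
  subst this
  rfl

/-- The grafting operation, by recursion on trees. -/
def gamma : ∀ {ic : Σ i : M.Idx, M.Cns i} (σ : STree M ic)
    (φ : (p : M.Pos ic.2) → M.Cns (M.Typ ic.2 p))
    (_ : (p : M.Pos ic.2) → STree M ⟨M.Typ ic.2 p, φ p⟩),
    STree M ⟨ic.1, M.mu ic.2 φ⟩
  | _, .lf i, φ, ψ =>
      cast (congrArg (STree M) (lfCastEq M i φ)) (ψ (M.etaPos i))
  | _, .nd c δ ε, φ, ψ =>
      cast (congrArg (STree M) (congrArg (Sigma.mk _)
          (M.assoc c δ φ (M.muPosTyp c δ)).symm))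
        (STree.nd c
          (fun p => M.mu (δ p)
            (fun q => cast (congrArg M.Cns (M.muPosTyp c δ p q)) (φ (M.muPos c δ p q))))
          (fun p => gamma (ε p)
            (fun q => cast (congrArg M.Cns (M.muPosTyp c δ p q)) (φ (M.muPos c δ p q)))
            (fun q => cast (congrArg (STree M)
                (M.castSigma (M.muPosTyp c δ p q) (φ (M.muPos c δ p q))))
              (ψ (M.muPos c δ p q)))))

/-- The grafting operation packaged with its recursion equations. -/
def graft : Graft M where
  γ := fun {_} _ σ φ ψ => gamma M σ φ ψ
  lf_rule := fun i φ ψ => by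
    show HEq (gamma M (STree.lf i) φ ψ) _
    rw [gamma]
    exact cast_heq _ _
  nd_rule := fun c δ ε φ ψ => by
    show HEq (gamma M (STree.nd c δ ε) φ ψ) _
    rw [gamma]
    exact cast_heq _ _

/-- Right unitality, generalized over pointwise-leaf data. -/
theorem runital : ∀ {ic : Σ i : M.Idx, M.Cns i} (σ : STree M ic)
    (φ : (p : M.Pos ic.2) → M.Cns (M.Typ ic.2 p))
    (ψ : (p : M.Pos ic.2) → STree M ⟨M.Typ ic.2 p, φ p⟩)
    (hφ : ∀ p, φ p = M.eta (M.Typ ic.2 p))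
    (hψ : ∀ p, HEq (ψ p) (STree.lf (M.Typ ic.2 p))),
    HEq (gamma M σ φ ψ) σ
  | _, .lf i, φ, ψ, hφ, hψ => by
      rw [gamma]
      refine ((cast_heq _ _).trans ((hψ (M.etaPos i)).trans ?_))
      exact lfHEq M (M.etaTyp i (M.etaPos i))
  | _, .nd c δ ε, φ, ψ, hφ, hψ => by
      rw [gamma]
      refine (cast_heq _ _).trans ?_
      have hφ' : ∀ p q,
          cast (congrArg M.Cns (M.muPosTyp c δ p q)) (φ (M.muPos c δ p q))
            = M.eta (M.Typ (δ p) q) := by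
        intro p q
        rw [hφ (M.muPos c δ p q)]
        exact castEta M (M.muPosTyp c δ p q)
      have hδ : (fun p => M.mu (δ p)
          (fun q => cast (congrArg M.Cns (M.muPosTyp c δ p q)) (φ (M.muPos c δ p q))))
          = δ := by
        funext p
        have : (fun q => cast (congrArg M.Cns (M.muPosTyp c δ p q)) (φ (M.muPos c δ p q)))
            = fun q => M.eta (M.Typ (δ p) q) := funext (hφ' p)
        rw [this, M.unitR (δ p)]
      have hε : ∀ p, HEq (gamma M (ε p)
          (fun q => cast (congrArg M.Cns (M.muPosTyp c δ p q)) (φ (M.muPos c δ p q)))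
          (fun q => cast (congrArg (STree M)
              (M.castSigma (M.muPosTyp c δ p q) (φ (M.muPos c δ p q))))
            (ψ (M.muPos c δ p q)))) (ε p) := by
        intro p
        refine runital (ε p) _ _ (hφ' p) ?_
        intro q
        refine (cast_heq _ _).trans ((hψ (M.muPos c δ p q)).trans ?_)
        exact lfHEq M (M.muPosTyp c δ p q)
      exact ndHEq M c hδ _ _ hε

end Aux

/-- For a cartesian polynomial monad `M`, the grafting operation `γ` on trees is
well-typed (there exists an operation of the stated type satisfying its defining
recursion equations on leaves and nodes) and satisfies right unitality:
grafting leaves onto a tree `σ : Tree (i, c)` yields `σ` (up to the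
identification induced by right unitality of `μ M`). -/
theorem grafting_exists_and_right_unital (M : PM) :
    ∃ G : Graft M,
      ∀ {i : M.Idx} (c : M.Cns i) (σ : STree M ⟨i, c⟩),
        HEq (G.γ c σ (fun p => M.eta (M.Typ c p)) (fun p => STree.lf (M.Typ c p))) σ := by
  refine ⟨graft M, fun {i} c σ => ?_⟩
  exact runital M σ _ _ (fun p => rfl) (fun p => HEq.rfl)
end

section
/- The slice construction yields a polynomial monad: for a cartesian polynomial monad M, the polynomial Slice M with index type Σ (i : Idx M), Cns M i, constructors given by the Tree family, positions given by internal nodes (Pos (lf i) = Empty; Pos (nd c δ ε) = Unit ⊕ Σ (p : Pos M c), Pos (ε p)), typing projecting the constructor at a node, unit η (i,c) = corolla of c (node with all leaves), and multiplication defined by substitution via grafting (μ (lf i) φ = lf i; μ (nd c δ ε) φ = γ (φ (root node)) δ (λ p, μ (ε p) (φ restricted))), satisfies left unitality: μ (Slice M) (η (Slice M) (i,c)) φ = φ (root position), up to the identifications induced by the unit laws of M. -/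
theorem cast_eta (M : PM) {j k : M.Idx} (h : j = k) :
    cast (congrArg M.Cns h) (M.eta j) = M.eta k := by subst h; rfl

theorem heq_lf (M : PM) {j k : M.Idx} (h : j = k) :
    HEq (STree.lf (M := M) j) (STree.lf k) := by subst h; rfl

theorem gamma_congr (M : PM) (G : Graft M) {i : M.Idx} (c : M.Cns i)
    (T : STree M ⟨i, c⟩)
    {φ1 φ2 : (p : M.Pos c) → M.Cns (M.Typ c p)} (hφ : φ1 = φ2)
    {ψ1 : (p : M.Pos c) → STree M ⟨M.Typ c p, φ1 p⟩}
    {ψ2 : (p : M.Pos c) → STree M ⟨M.Typ c p, φ2 p⟩} (hψ : HEq ψ1 ψ2) :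
    HEq (G.γ c T φ1 ψ1) (G.γ c T φ2 ψ2) := by
  subst hφ; rw [eq_of_heq hψ]

theorem nd_congr (M : PM) {i : M.Idx} (c : M.Cns i)
    {δ1 δ2 : (p : M.Pos c) → M.Cns (M.Typ c p)} (hδ : δ1 = δ2)
    {ε1 : (p : M.Pos c) → STree M ⟨M.Typ c p, δ1 p⟩}
    {ε2 : (p : M.Pos c) → STree M ⟨M.Typ c p, δ2 p⟩}
    (hε : ∀ p, HEq (ε1 p) (ε2 p)) :
    HEq (STree.nd c δ1 ε1) (STree.nd c δ2 ε2) := by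
  subst hδ
  have : ε1 = ε2 := funext fun p => eq_of_heq (hε p)
  subst this; rfl

theorem cast_lf (M : PM) {j k : M.Idx} (h : j = k) :
    HEq (cast (congrArg (STree M) (M.castSigma h (M.eta j))) (STree.lf (M := M) j))
      (STree.lf (M := M) k) := by
  subst h; rfl

theorem graft_unit (M : PM) (G : Graft M) :
    ∀ {ic : Σ i : M.Idx, M.Cns i} (T : STree M ic),
      HEq (G.γ ic.2 T (fun p => M.eta (M.Typ ic.2 p))
        (fun p => STree.lf (M.Typ ic.2 p))) T := by
  intro ic T
  induction T with
  | lf i =>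
      refine HEq.trans (G.lf_rule i _ _) ?_
      exact heq_lf M (M.etaTyp i (M.etaPos i))
  | nd c δ ε ih =>
      refine HEq.trans (G.nd_rule c δ ε _ _) ?_
      have hδ : ∀ p : M.Pos c,
          (fun q => cast (congrArg M.Cns (M.muPosTyp c δ p q))
            (M.eta (M.Typ (M.mu c δ) (M.muPos c δ p q)))) =
          fun q => M.eta (M.Typ (δ p) q) :=
        fun p => funext fun q => cast_eta M (M.muPosTyp c δ p q)
      refine nd_congr M c ?_ ?_
      · funext p
        rw [hδ p, M.unitR (δ p)]
      · intro p
        refine HEq.trans (gamma_congr M G (δ p) (ε p) (hδ p) ?_) (ih p)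
        · refine Function.hfunext rfl ?_
          intro q q' hq
          cases hq
          exact cast_lf M (M.muPosTyp c δ p q)

/-- Left unitality of the slice monad: substituting a decoration `φ` into the
unit (the corolla on `c`) yields the tree at the root position, up to the
identifications induced by the unit laws of `M`. -/
theorem slice_left_unital (M : PM) (S : SliceOps M) :
    ∀ {i : M.Idx} (c : M.Cns i)
      (φ : (p : TreePos M (corolla M c)) → STree M (TreeTyp M p)),
      HEq (S.smu (corolla M c) φ) (φ TreePos.here) := by
  intro i c φ
  have h1 := S.smu_nd c (fun p => M.eta (M.Typ c p)) (fun p => STree.lf (M.Typ c p)) φ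
  have h2 : (fun p => S.smu (STree.lf (M.Typ c p))
      (fun q => φ (TreePos.there p q))) =
      fun p : M.Pos c => STree.lf (M.Typ c p) :=
    funext fun p => S.smu_lf (M.Typ c p) _
  refine HEq.trans (heq_of_eq h1) ?_
  rw [h2]
  exact graft_unit M S.toGraft (φ TreePos.here)
end

section
/- The slice monad is cartesian: for every (i, c), the positions of the corolla η (Slice M) (i, c) form a contractible type (equivalent to Unit), and the positions of a substituted tree μ (Slice M) σ φ are equivalent to Σ (p : Pos (Slice M) σ), Pos (Slice M) (φ p), compatibly with the typing function. -/
namespace SliceAux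

variable {M : PM}

/-- Typed equivalence: an equivalence commuting with typing maps. -/
def TEquiv {α β I : Type} (f : α → I) (g : β → I) : Type :=
  { e : α ≃ β // ∀ a, f a = g (e a) }

def TEquiv.trans {α β γ I : Type} {f : α → I} {g : β → I} {h : γ → I}
    (e₁ : TEquiv f g) (e₂ : TEquiv g h) : TEquiv f h :=
  ⟨e₁.1.trans e₂.1, fun a => (e₁.2 a).trans (e₂.2 _)⟩

def TEquiv.refl {α I : Type} (f : α → I) : TEquiv f f := ⟨Equiv.refl α, fun _ => rfl⟩

def TEquiv.sumCongr {α α' β β' I : Type} {f : α → I} {g : β → I} {f' : α' → I} {g' : β' → I}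
    (E : TEquiv f g) (E' : TEquiv f' g') : TEquiv (Sum.elim f f') (Sum.elim g g') :=
  ⟨Equiv.sumCongr E.1 E'.1, by rintro (a | a); exacts [E.2 a, E'.2 a]⟩

def TEquiv.sigmaCongrRight {α I : Type} {β β' : α → Type}
    {f : ∀ a, β a → I} {g : ∀ a, β' a → I} (E : ∀ a, TEquiv (f a) (g a)) :
    TEquiv (fun x : Σ a, β a => f x.1 x.2) (fun x : Σ a, β' a => g x.1 x.2) :=
  ⟨Equiv.sigmaCongrRight fun a => (E a).1, by rintro ⟨a, b⟩; exact (E a).2 b⟩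

def heqTE {ic jc : Σ i : M.Idx, M.Cns i} (hij : ic = jc) {σ : STree M ic} {τ : STree M jc}
    (h : HEq σ τ) : TEquiv (TreeTyp M (σ := σ)) (TreeTyp M (σ := τ)) := by
  subst hij; cases h; exact ⟨Equiv.refl _, fun _ => rfl⟩

def castTE {jc ic : Σ i : M.Idx, M.Cns i} (h : jc = ic) (σ : STree M jc) :
    TEquiv (TreeTyp M (σ := cast (congrArg (STree M) h) σ)) (TreeTyp M (σ := σ)) :=
  heqTE h.symm (cast_heq _ _)

/-- The code of positions of a tree: a sum, by cases on the root. -/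
def PosCode {jc : Σ i : M.Idx, M.Cns i} (σ : STree M jc) : Type :=
  STree.casesOn (motive := fun _ _ => Type) σ
    (fun _ => Empty)
    (fun c _ ε => PUnit ⊕ Σ p : M.Pos c, TreePos M (ε p))

def toCode {jc : Σ i : M.Idx, M.Cns i} {σ : STree M jc} (r : TreePos M σ) : PosCode σ :=
  TreePos.casesOn (motive := fun {_} σ _ => PosCode σ) r
    (fun {_ _ _ _} => Sum.inl PUnit.unit)
    (fun {_ _ _ _} p q => Sum.inr ⟨p, q⟩)

def ofCode {jc : Σ i : M.Idx, M.Cns i} (σ : STree M jc) : PosCode σ → TreePos M σ :=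
  STree.casesOn (motive := fun _ σ => PosCode σ → TreePos M σ) σ
    (fun _ x => x.elim)
    (fun _ _ _ x => Sum.rec (fun _ => .here) (fun y => .there y.1 y.2) x)

def codeTyp {jc : Σ i : M.Idx, M.Cns i} (σ : STree M jc) :
    PosCode σ → Σ i : M.Idx, M.Cns i :=
  STree.casesOn (motive := fun _ σ => PosCode σ → Σ i : M.Idx, M.Cns i) σ
    (fun _ x => x.elim)
    (fun c _ _ x => Sum.rec (fun _ => ⟨_, c⟩) (fun y => TreeTyp M y.2) x)

theorem ofCode_toCode {jc : Σ i : M.Idx, M.Cns i} {σ : STree M jc} (r : TreePos M σ) :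
    ofCode σ (toCode r) = r := by cases r <;> rfl

theorem toCode_ofCode {jc : Σ i : M.Idx, M.Cns i} (σ : STree M jc) (x : PosCode σ) :
    toCode (ofCode σ x) = x := by
  cases σ with
  | lf i => exact x.elim
  | nd c δ ε => rcases x with _ | ⟨p, q⟩ <;> rfl

theorem typ_toCode {jc : Σ i : M.Idx, M.Cns i} {σ : STree M jc} (r : TreePos M σ) :
    TreeTyp M r = codeTyp σ (toCode r) := by cases r <;> rfl

def ndEquiv (M : PM) {i : M.Idx} (c : M.Cns i) (δ : (p : M.Pos c) → M.Cns (M.Typ c p))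
    (ε : (p : M.Pos c) → STree M ⟨M.Typ c p, δ p⟩) :
    TreePos M (STree.nd c δ ε) ≃ (PUnit ⊕ Σ p : M.Pos c, TreePos M (ε p)) where
  toFun := toCode
  invFun := ofCode (STree.nd c δ ε)
  left_inv := ofCode_toCode
  right_inv := toCode_ofCode (STree.nd c δ ε)

theorem codeTyp_nd {i : M.Idx} {c : M.Cns i} {δ : (p : M.Pos c) → M.Cns (M.Typ c p)}
    {ε : (p : M.Pos c) → STree M ⟨M.Typ c p, δ p⟩} (x : PosCode (STree.nd c δ ε)) :
    codeTyp (STree.nd c δ ε) x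
      = Sum.elim (fun _ : PUnit => (⟨i, c⟩ : Σ i : M.Idx, M.Cns i))
          (fun y : Σ p : M.Pos c, TreePos M (ε p) => TreeTyp M y.2) x := by
  rcases x with _ | ⟨p, q⟩ <;> rfl

def ndTE (M : PM) {i : M.Idx} (c : M.Cns i) (δ : (p : M.Pos c) → M.Cns (M.Typ c p))
    (ε : (p : M.Pos c) → STree M ⟨M.Typ c p, δ p⟩) :
    TEquiv (TreeTyp M (σ := STree.nd c δ ε))
      (Sum.elim (fun _ : PUnit => (⟨i, c⟩ : Σ i : M.Idx, M.Cns i))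
        (fun x : Σ p : M.Pos c, TreePos M (ε p) => TreeTyp M x.2)) :=
  ⟨ndEquiv M c δ ε, fun r => (typ_toCode r).trans (codeTyp_nd (toCode r))⟩

/-- Distribution of a sigma over a sum in the base. -/
def sigmaSum {A B : Type} (γ : A ⊕ B → Type) :
    (Σ x : A ⊕ B, γ x) ≃ ((Σ a : A, γ (.inl a)) ⊕ (Σ b : B, γ (.inr b))) where
  toFun x := match x with
    | ⟨.inl a, t⟩ => .inl ⟨a, t⟩
    | ⟨.inr b, t⟩ => .inr ⟨b, t⟩
  invFun x := match x with
    | .inl ⟨a, t⟩ => ⟨.inl a, t⟩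
    | .inr ⟨b, t⟩ => ⟨.inr b, t⟩
  left_inv := by rintro ⟨a | b, t⟩ <;> rfl
  right_inv := by rintro (⟨a, t⟩ | ⟨b, t⟩) <;> rfl

def punitSigma (X : Type) : (Σ _ : PUnit, X) ≃ X :=
  ⟨fun x => x.2, fun t => ⟨⟨⟩, t⟩, by rintro ⟨⟨⟩, t⟩; rfl, fun _ => rfl⟩

def muEquiv (M : PM) {i : M.Idx} (c : M.Cns i) (δ : (p : M.Pos c) → M.Cns (M.Typ c p)) :
    (Σ p : M.Pos c, M.Pos (δ p)) ≃ M.Pos (M.mu c δ) where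
  toFun x := M.muPos c δ x.1 x.2
  invFun r := ⟨M.muFst c δ r, M.muSnd c δ r⟩
  left_inv := by
    rintro ⟨p, q⟩
    exact Sigma.ext (M.muFstBeta c δ p q) (M.muSndBeta c δ p q)
  right_inv r := M.muPosEta c δ r

def corollaTE (M : PM) {i : M.Idx} (c : M.Cns i) :
    TEquiv (TreeTyp M (σ := corolla M c)) (fun _ : PUnit => (⟨i, c⟩ : Σ i : M.Idx, M.Cns i)) :=
  TEquiv.trans (ndTE M c (fun p => M.eta (M.Typ c p)) (fun p => STree.lf (M.Typ c p)))
    ⟨⟨fun _ => ⟨⟩, fun _ => .inl ⟨⟩,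
      by
        rintro (⟨⟩ | ⟨p, q⟩)
        exacts [rfl, (toCode q).elim],
      fun _ => rfl⟩,
     by
       rintro (⟨⟩ | ⟨p, q⟩)
       exacts [rfl, (toCode q).elim]⟩

theorem graft_pos (M : PM) (G : Graft M) :
    ∀ {ic : Σ i : M.Idx, M.Cns i} (τ : STree M ic)
      (φ : (p : M.Pos ic.2) → M.Cns (M.Typ ic.2 p))
      (ψ : (p : M.Pos ic.2) → STree M ⟨M.Typ ic.2 p, φ p⟩),
      Nonempty (TEquiv (TreeTyp M (σ := G.γ ic.2 τ φ ψ))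
        (Sum.elim (TreeTyp M (σ := τ))
          (fun x : Σ p : M.Pos ic.2, TreePos M (ψ p) => TreeTyp M x.2))) := by
  intro ic τ
  induction τ with
  | lf i =>
    intro φ ψ
    have hij : (⟨i, M.mu (M.eta i) φ⟩ : Σ i : M.Idx, M.Cns i)
        = ⟨M.Typ (M.eta i) (M.etaPos i), φ (M.etaPos i)⟩ :=
      Sigma.ext (M.etaTyp i (M.etaPos i)).symm (M.unitL i φ)
    refine ⟨(heqTE hij (G.lf_rule i φ ψ)).trans
      ⟨{ toFun := fun q => .inr ⟨M.etaPos i, q⟩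
         invFun := fun x => Sum.rec (fun q => (toCode q).elim)
           (fun y => (M.etaPosUnique i y.1) ▸ y.2) x
         left_inv := fun q => rfl
         right_inv := ?_ }, fun q => rfl⟩⟩
    rintro (q | ⟨p, q⟩)
    · exact (toCode q).elim
    · have h := M.etaPosUnique i p
      subst h
      rfl
  | @nd i c δ ε IH =>
    intro φ ψ
    have hij : (⟨i, M.mu (M.mu c δ) φ⟩ : Σ i : M.Idx, M.Cns i)
        = ⟨i, M.mu c (fun p => M.mu (δ p)
            (fun q => cast (congrArg M.Cns (M.muPosTyp c δ p q)) (φ (M.muPos c δ p q))))⟩ :=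
      congrArg (Sigma.mk i) (M.assoc c δ φ (fun p q => M.muPosTyp c δ p q))
    have hE1 := heqTE hij (G.nd_rule c δ ε φ ψ)
    have hE2 := ndTE M c
      (fun p => M.mu (δ p)
        (fun q => cast (congrArg M.Cns (M.muPosTyp c δ p q)) (φ (M.muPos c δ p q))))
      (fun p => G.γ (δ p) (ε p)
        (fun q => cast (congrArg M.Cns (M.muPosTyp c δ p q)) (φ (M.muPos c δ p q)))
        (fun q => cast (congrArg (STree M)
            (M.castSigma (M.muPosTyp c δ p q) (φ (M.muPos c δ p q))))
          (ψ (M.muPos c δ p q))))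
    have Ep : ∀ p : M.Pos c,
        TEquiv (TreeTyp M (σ := G.γ (δ p) (ε p)
            (fun q => cast (congrArg M.Cns (M.muPosTyp c δ p q)) (φ (M.muPos c δ p q)))
            (fun q => cast (congrArg (STree M)
                (M.castSigma (M.muPosTyp c δ p q) (φ (M.muPos c δ p q))))
              (ψ (M.muPos c δ p q)))))
          (Sum.elim (TreeTyp M (σ := ε p))
            (fun x : Σ q : M.Pos (δ p), TreePos M (ψ (M.muPos c δ p q)) => TreeTyp M x.2)) :=
      fun p =>
        (Classical.choice (IH p _ _)).trans
          (TEquiv.sumCongr (TEquiv.refl _)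
            (TEquiv.sigmaCongrRight fun q =>
              castTE (M.castSigma (M.muPosTyp c δ p q) (φ (M.muPos c δ p q)))
                (ψ (M.muPos c δ p q))))
    have hE3 := TEquiv.sumCongr
      (TEquiv.refl (fun _ : PUnit => (⟨i, c⟩ : Σ i : M.Idx, M.Cns i)))
      (TEquiv.sigmaCongrRight Ep)
    refine ⟨hE1.trans (hE2.trans (hE3.trans ⟨?_, ?_⟩))⟩
    · exact (Equiv.sumCongr (Equiv.refl PUnit)
        (Equiv.sigmaSumDistrib _ _)).trans
        ((Equiv.sumAssoc _ _ _).symm.trans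
          (Equiv.sumCongr (ndEquiv M c δ ε).symm
            ((Equiv.sigmaAssoc
                (fun p q => TreePos M (ψ (M.muPos c δ p q)))).symm.trans
              (Equiv.sigmaCongrLeft (β := fun r => TreePos M (ψ r)) (muEquiv M c δ)))))
    · rintro (⟨⟩ | ⟨p, t | ⟨q, s⟩⟩) <;> rfl

theorem smu_pos (M : PM) (S : SliceOps M) :
    ∀ {ic : Σ i : M.Idx, M.Cns i} (σ : STree M ic)
      (φ : (p : TreePos M σ) → STree M (TreeTyp M p)),
      Nonempty (TEquiv (TreeTyp M (σ := S.smu σ φ))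
        (fun x : Σ p : TreePos M σ, TreePos M (φ p) => TreeTyp M x.2)) := by
  intro ic σ
  induction σ with
  | lf i =>
    intro φ
    exact ⟨(heqTE rfl (heq_of_eq (S.smu_lf i φ))).trans
      ⟨⟨fun p => (toCode p).elim, fun x => (toCode x.1).elim,
        fun p => (toCode p).elim, fun x => (toCode x.1).elim⟩,
       fun p => (toCode p).elim⟩⟩
  | @nd i c δ ε IH =>
    intro φ
    have hE0 := heqTE rfl (heq_of_eq (S.smu_nd c δ ε φ))
    obtain ⟨hE1⟩ := graft_pos M S.toGraft (ic := ⟨i, c⟩) (φ TreePos.here) δ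
      (fun p => S.smu (ε p) (fun q => φ (TreePos.there p q)))
    have Ep : ∀ p : M.Pos c,
        TEquiv (TreeTyp M (σ := S.smu (ε p) (fun q => φ (TreePos.there p q))))
          (fun x : Σ q : TreePos M (ε p), TreePos M (φ (TreePos.there p q)) =>
            TreeTyp M x.2) :=
      fun p => Classical.choice (IH p _)
    have hE2 := TEquiv.sumCongr (TEquiv.refl (TreeTyp M (σ := φ TreePos.here)))
      (TEquiv.sigmaCongrRight Ep)
    refine ⟨hE0.trans (hE1.trans (hE2.trans ⟨?_, ?_⟩))⟩
    · exact (Equiv.sumCongr (punitSigma (TreePos M (φ TreePos.here))).symm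
        (Equiv.sigmaAssoc
          (fun (p : M.Pos c) (q : TreePos M (ε p)) =>
            TreePos M (φ (TreePos.there p q)))).symm).trans
        (((sigmaSum _).symm).trans
          (Equiv.sigmaCongrLeft (β := fun r => TreePos M (φ r))
            (ndEquiv M c δ ε).symm))
    · rintro (t | ⟨p, q, t⟩) <;> rfl

end SliceAux

/-- The slice monad is cartesian: positions of the unit (the corolla) form a
type equivalent to the unit type, and positions of a substituted tree
`μ (Slice M) σ φ` are equivalent to `Σ (p : Pos σ), Pos (φ p)`, compatibly
with the typing function. -/
theorem slice_cartesian (M : PM) (S : SliceOps M) :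
    (∀ (ic : Σ i : M.Idx, M.Cns i),
      ∃ _ : TreePos M (sliceEta M ic) ≃ PUnit,
        ∀ p : TreePos M (sliceEta M ic), TreeTyp M p = ic) ∧
    (∀ {ic : Σ i : M.Idx, M.Cns i} (σ : STree M ic)
      (φ : (p : TreePos M σ) → STree M (TreeTyp M p)),
      ∃ e : TreePos M (S.smu σ φ) ≃ (Σ p : TreePos M σ, TreePos M (φ p)),
        ∀ r : TreePos M (S.smu σ φ), TreeTyp M r = TreeTyp M (e r).2) := by
  constructor
  · intro ic
    have E := (SliceAux.castTE (congrArg (Sigma.mk ic.1) (M.unitR ic.2))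
        (corolla M ic.2)).trans (SliceAux.corollaTE M ic.2)
    exact ⟨E.1.trans Equiv.punitEquivPUnit, fun p => E.2 p⟩
  · intro ic σ φ
    obtain ⟨E⟩ := SliceAux.smu_pos M S σ φ
    exact ⟨E.1, E.2⟩
end

section
/- Positions of grafting decompose: for σ : Tree (i, c) and grafting data φ, ψ, the positions of γ σ φ ψ are equivalent to the disjoint union of the positions of σ and Σ (p : Pos M c), Pos (Slice M) (ψ p), and this equivalence commutes with the typing functions. -/
/-!
Induction on `σ` along the recursion equations of `γ`, tracking position types together with
their node types (`EquivOver`); the equations hold up to `HEq` over the unit and associativity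
laws of `M`, which does not change positions. At a leaf, `γ (lf i) φ ψ` is `ψ (etaPos i)`,
`Pos (eta i)` is a singleton and the leaf has no nodes. At a node `nd c δ ε` the graft is a node
over `c` whose subtrees are graftings into the `ε p`, so by induction its positions are
`Unit ⊕ Σ p, (Pos (ε p) ⊕ Σ q, Pos (ψ (muPos p q)))`. Regrouping gives
`(Unit ⊕ Σ p, Pos (ε p)) ⊕ Σ p q, Pos (ψ (muPos p q))`, which is
`Pos (nd c δ ε) ⊕ Σ r, Pos (ψ r)` by the cartesian equivalence `Σ p, Pos (δ p) ≃ Pos (mu c δ)`.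
-/

def EquivOver {X Y B : Type*} (f : X → B) (g : Y → B) : Prop :=
  ∃ e : X ≃ Y, ∀ x, f x = g (e x)

namespace EquivOver

variable {X Y Z X' Y' B : Type*} {f : X → B} {g : Y → B} {h : Z → B}

theorem refl (f : X → B) : EquivOver f f := ⟨Equiv.refl X, fun _ => rfl⟩

theorem symm : EquivOver f g → EquivOver g f
  | ⟨e, he⟩ => ⟨e.symm, fun y => by rw [he, e.apply_symm_apply]⟩

theorem trans : EquivOver f g → EquivOver g h → EquivOver f h
  | ⟨e, he⟩, ⟨e', he'⟩ => ⟨e.trans e', fun x => (he x).trans (he' (e x))⟩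

theorem sumCongr {f' : X' → B} {g' : Y' → B} :
    EquivOver f g → EquivOver f' g' → EquivOver (Sum.elim f f') (Sum.elim g g')
  | ⟨e, he⟩, ⟨e', he'⟩ => ⟨e.sumCongr e', by rintro (x | x); exacts [he x, he' x]⟩

theorem sigmaCongrRight {A : Type*} {P Q : A → Type*} {f : ∀ a, P a → B} {g : ∀ a, Q a → B}
    (H : ∀ a, EquivOver (f a) (g a)) : EquivOver (Sigma.uncurry f) (Sigma.uncurry g) := by
  choose e he using H
  exact ⟨Equiv.sigmaCongrRight e, fun ⟨a, x⟩ => he a x⟩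

theorem sumAssoc (f : X → B) (g : Y → B) (h : Z → B) :
    EquivOver (Sum.elim (Sum.elim f g) h) (Sum.elim f (Sum.elim g h)) :=
  ⟨Equiv.sumAssoc X Y Z, by rintro ((x | x) | x) <;> rfl⟩

theorem emptySum [IsEmpty X] (f : X → B) (g : Y → B) : EquivOver (Sum.elim f g) g :=
  ⟨Equiv.emptySum X Y, by rintro (x | x); exacts [isEmptyElim x, rfl]⟩

theorem uniqueSigma {A : Type*} [Unique A] {P : A → Type*} (f : ∀ a, P a → B) :
    EquivOver (Sigma.uncurry f) (f default) :=
  ⟨Equiv.uniqueSigma P, by rintro ⟨a, x⟩; obtain rfl := Unique.eq_default a; rfl⟩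

theorem sigmaSumDistrib {A : Type*} {P Q : A → Type*} (f : ∀ a, P a → B) (g : ∀ a, Q a → B) :
    EquivOver (Sigma.uncurry fun a => Sum.elim (f a) (g a))
      (Sum.elim (Sigma.uncurry f) (Sigma.uncurry g)) :=
  ⟨Equiv.sigmaSumDistrib P Q, by rintro ⟨a, x | x⟩ <;> rfl⟩

theorem sigmaSigmaCongrLeft {A D : Type*} {C : A → Type*} {P : D → Type*}
    (e : (Σ a, C a) ≃ D) (f : ∀ d, P d → B) :
    EquivOver (Sigma.uncurry fun a => Sigma.uncurry fun c => f (e ⟨a, c⟩)) (Sigma.uncurry f) :=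
  ⟨(Equiv.sigmaAssoc fun a c => P (e ⟨a, c⟩)).symm.trans (Equiv.sigmaCongrLeft e),
    fun _ => rfl⟩

end EquivOver

section

variable (M : PM)

instance PM.uniqueEtaPos (i : M.Idx) : Unique (M.Pos (M.eta i)) :=
  ⟨⟨M.etaPos i⟩, M.etaPosUnique i⟩

def PM.muPosEquiv {i : M.Idx} (c : M.Cns i) (δ : (p : M.Pos c) → M.Cns (M.Typ c p)) :
    (Σ p : M.Pos c, M.Pos (δ p)) ≃ M.Pos (M.mu c δ) where
  toFun x := M.muPos c δ x.1 x.2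
  invFun r := ⟨M.muFst c δ r, M.muSnd c δ r⟩
  left_inv := fun ⟨p, q⟩ => Sigma.ext (M.muFstBeta c δ p q) (M.muSndBeta c δ p q)
  right_inv := M.muPosEta c δ

def TreePos.Cases : ∀ {ic : Σ i : M.Idx, M.Cns i}, STree M ic → Type
  | _, .lf _ => Empty
  | _, .nd _ _ ε => Unit ⊕ Σ p, TreePos M (ε p)

def TreePos.toCases : ∀ {ic : Σ i : M.Idx, M.Cns i} {σ : STree M ic},
    TreePos M σ → TreePos.Cases M σ
  | _, _, .here => .inl ⟨⟩
  | _, _, .there p q => .inr ⟨p, q⟩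

def TreePos.ofCases : ∀ {ic : Σ i : M.Idx, M.Cns i} (σ : STree M ic),
    TreePos.Cases M σ → TreePos M σ
  | _, .lf _, x => x.elim
  | _, .nd _ _ _, x => match x with
    | Sum.inl _ => .here
    | Sum.inr ⟨p, q⟩ => .there p q

def TreePos.equivCases {ic : Σ i : M.Idx, M.Cns i} (σ : STree M ic) :
    TreePos M σ ≃ TreePos.Cases M σ where
  toFun := TreePos.toCases M
  invFun := TreePos.ofCases M σ
  left_inv r := by cases r <;> rfl
  right_inv x := by cases σ <;> rcases x with _ | ⟨_, _⟩ <;> rfl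

end

variable {M : PM}

instance TreePos.isEmpty_lf (i : M.Idx) : IsEmpty (TreePos M (STree.lf i)) :=
  ⟨fun r => Empty.elim (TreePos.toCases M r)⟩

theorem TreePos.equivOver_nd {i : M.Idx} (c : M.Cns i) (δ : (p : M.Pos c) → M.Cns (M.Typ c p))
    (ε : (p : M.Pos c) → STree M ⟨M.Typ c p, δ p⟩) :
    EquivOver (TreeTyp M (σ := STree.nd c δ ε))
      (Sum.elim (fun _ : Unit => ⟨i, c⟩) (Sigma.uncurry fun p => TreeTyp M (σ := ε p))) :=
  EquivOver.symm ⟨(TreePos.equivCases M (STree.nd c δ ε)).symm, by rintro (_ | ⟨_, _⟩) <;> rfl⟩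

theorem TreePos.equivOver_of_heq {ic jd : Σ i : M.Idx, M.Cns i} (h : ic = jd)
    {σ : STree M ic} {τ : STree M jd} (hστ : HEq σ τ) :
    EquivOver (TreeTyp M (σ := σ)) (TreeTyp M (σ := τ)) := by
  subst h; cases hστ; exact .refl _

theorem TreePos.equivOver_cast {ic jd : Σ i : M.Idx, M.Cns i} (h : ic = jd) (σ : STree M ic) :
    EquivOver (TreeTyp M (σ := cast (congrArg (STree M) h) σ)) (TreeTyp M (σ := σ)) :=
  TreePos.equivOver_of_heq h.symm (cast_heq _ σ)

theorem Graft.equivOver_treePos_γ (G : Graft M) {ic : Σ i : M.Idx, M.Cns i} (σ : STree M ic)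
    (φ : (p : M.Pos ic.2) → M.Cns (M.Typ ic.2 p))
    (ψ : (p : M.Pos ic.2) → STree M ⟨M.Typ ic.2 p, φ p⟩) :
    EquivOver (TreeTyp M (σ := G.γ ic.2 σ φ ψ))
      (Sum.elim (TreeTyp M (σ := σ)) (Sigma.uncurry fun p => TreeTyp M (σ := ψ p))) := by
  induction σ with
  | lf i =>
    exact (TreePos.equivOver_of_heq (Sigma.ext (M.etaTyp i _).symm (M.unitL i φ))
      (G.lf_rule i φ ψ)).trans <|
      (EquivOver.uniqueSigma fun p => TreeTyp M (σ := ψ p)).symm.trans (EquivOver.emptySum _ _).symm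
  | nd c δ ε ih =>
    exact (TreePos.equivOver_of_heq (congrArg (Sigma.mk _) (M.assoc c δ φ (M.muPosTyp c δ)))
      (G.nd_rule c δ ε φ ψ)).trans <|
      (TreePos.equivOver_nd _ _ _).trans <|
      (EquivOver.sumCongr (.refl _) (EquivOver.sigmaCongrRight fun p => (ih p _ _).trans
        (EquivOver.sumCongr (.refl _) (EquivOver.sigmaCongrRight fun q =>
          TreePos.equivOver_cast (M.castSigma (M.muPosTyp c δ p q) _) _)))).trans <|
      (EquivOver.sumCongr (.refl _) (EquivOver.sigmaSumDistrib _ _)).trans <|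
      (EquivOver.sumAssoc _ _ _).symm.trans <|
      EquivOver.sumCongr (TreePos.equivOver_nd c δ ε).symm
        (EquivOver.sigmaSigmaCongrLeft (M.muPosEquiv c δ) fun r => TreeTyp M (σ := ψ r))

/-- Positions of a grafting decompose: the positions of `γ σ φ ψ` are
equivalent to the disjoint union of the positions of `σ` and the positions of
the grafted trees `ψ p`, and this equivalence commutes with the typing
functions. -/
theorem grafting_positions (M : PM) (G : Graft M) :
    ∀ {i : M.Idx} (c : M.Cns i) (σ : STree M ⟨i, c⟩)
      (φ : (p : M.Pos c) → M.Cns (M.Typ c p))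
      (ψ : (p : M.Pos c) → STree M ⟨M.Typ c p, φ p⟩),
      ∃ e : TreePos M (G.γ c σ φ ψ) ≃ (TreePos M σ ⊕ Σ p : M.Pos c, TreePos M (ψ p)),
        ∀ r : TreePos M (G.γ c σ φ ψ),
          TreeTyp M r =
            Sum.elim (fun s => TreeTyp M s) (fun ps => TreeTyp M ps.2) (e r) :=
  fun _ σ φ ψ => G.equivOver_treePos_γ σ φ ψ
end

section
/- Leaves of a tree correspond to positions of its underlying constructor: for a cartesian polynomial monad M and a tree σ : Tree (i, c), the type of leaves of σ (defined recursively: leaves of lf i is Unit, leaves of nd c δ ε is Σ (p : Pos M c), leaves (ε p)) is equivalent to Pos M c, compatibly with typing. -/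
/-- Leaves of a tree: a leaf tree has exactly one leaf, and a leaf of a node
is a position of the base constructor together with a leaf of the attached
tree.  (This inductive family realizes the recursive definition
`leaves (lf i) = Unit`, `leaves (nd c δ ε) = Σ p, leaves (ε p)`.) -/
inductive Leaves (M : PM) : ∀ {ic : Σ i : M.Idx, M.Cns i}, STree M ic → Type where
  | lfLeaf : (i : M.Idx) → Leaves M (STree.lf i)
  | ndLeaf : {i : M.Idx} → {c : M.Cns i} → {δ : (p : M.Pos c) → M.Cns (M.Typ c p)} →
      {ε : (p : M.Pos c) → STree M ⟨M.Typ c p, δ p⟩} →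
      (p : M.Pos c) → Leaves M (ε p) → Leaves M (STree.nd c δ ε)

/-- The index at which a leaf sits. -/
def LeafTyp (M : PM) : ∀ {ic : Σ i : M.Idx, M.Cns i} {σ : STree M ic},
    Leaves M σ → M.Idx
  | _, _, .lfLeaf i => i
  | _, _, .ndLeaf _ l => LeafTyp M l


def l2p (M : PM) : ∀ {ic : Σ i : M.Idx, M.Cns i} {σ : STree M ic},
    Leaves M σ → M.Pos ic.2
  | _, _, .lfLeaf i => M.etaPos i
  | _, _, .ndLeaf (c := c) (δ := δ) p l => M.muPos c δ p (l2p M l)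

def p2l (M : PM) : ∀ {ic : Σ i : M.Idx, M.Cns i} (σ : STree M ic),
    M.Pos ic.2 → Leaves M σ
  | _, .lf i, _ => .lfLeaf i
  | _, .nd c δ ε, q => .ndLeaf (M.muFst c δ q) (p2l M (ε _) (M.muSnd c δ q))

theorem ndLeaf_congr (M : PM) {i : M.Idx} {c : M.Cns i}
    {δ : (p : M.Pos c) → M.Cns (M.Typ c p)}
    {ε : (p : M.Pos c) → STree M ⟨M.Typ c p, δ p⟩}
    {p p' : M.Pos c} (h : p = p') {l : Leaves M (ε p)} {l' : Leaves M (ε p')}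
    (hl : HEq l l') :
    Leaves.ndLeaf (δ := δ) (ε := ε) p l = Leaves.ndLeaf p' l' := by
  subst h; cases hl; rfl

theorem p2l_congr (M : PM) {i : M.Idx} {c : M.Cns i}
    {δ : (p : M.Pos c) → M.Cns (M.Typ c p)}
    {ε : (p : M.Pos c) → STree M ⟨M.Typ c p, δ p⟩}
    {p p' : M.Pos c} (h : p = p') {q : M.Pos (δ p)} {q' : M.Pos (δ p')}
    (hq : HEq q q') :
    HEq (p2l M (ε p) q) (p2l M (ε p') q') := by
  subst h; cases hq; rfl

theorem p2l_l2p (M : PM) : ∀ {ic : Σ i : M.Idx, M.Cns i} {σ : STree M ic}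
    (l : Leaves M σ), p2l M σ (l2p M l) = l
  | _, _, .lfLeaf i => rfl
  | _, _, .ndLeaf (c := c) (δ := δ) (ε := ε) p l => by
      show Leaves.ndLeaf _ _ = _
      refine ndLeaf_congr M (M.muFstBeta c δ p (l2p M l)) ?_
      refine HEq.trans (p2l_congr M (M.muFstBeta c δ p (l2p M l))
        (M.muSndBeta c δ p (l2p M l))) ?_
      rw [p2l_l2p M l]

theorem l2p_p2l (M : PM) : ∀ {ic : Σ i : M.Idx, M.Cns i} (σ : STree M ic)
    (q : M.Pos ic.2), l2p M (p2l M σ q) = q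
  | _, .lf i, q => (M.etaPosUnique i q).symm
  | _, .nd c δ ε, q => by
      show M.muPos c δ _ (l2p M (p2l M (ε _) (M.muSnd c δ q))) = q
      rw [l2p_p2l M (ε _) (M.muSnd c δ q), M.muPosEta c δ q]

theorem l2p_typ (M : PM) : ∀ {ic : Σ i : M.Idx, M.Cns i} {σ : STree M ic}
    (l : Leaves M σ), LeafTyp M l = M.Typ ic.2 (l2p M l)
  | _, _, .lfLeaf i => (M.etaTyp i (M.etaPos i)).symm
  | _, _, .ndLeaf (c := c) (δ := δ) p l => by
      show LeafTyp M l = _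
      rw [l2p_typ M l]
      exact (M.muPosTyp c δ p (l2p M l)).symm

/-- Leaves of a tree correspond to positions of its underlying constructor:
for `σ : Tree (i, c)` the type of leaves of `σ` is equivalent to `Pos M c`,
compatibly with typing. -/
theorem leaves_equiv_positions (M : PM) :
    ∀ {i : M.Idx} (c : M.Cns i) (σ : STree M ⟨i, c⟩),
      ∃ e : Leaves M σ ≃ M.Pos c,
        ∀ l : Leaves M σ, LeafTyp M l = M.Typ c (e l) := by
  intro i c σ
  exact ⟨⟨l2p M, p2l M σ, p2l_l2p M, l2p_p2l M σ⟩, fun l => l2p_typ M l⟩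
end

section
/- The rewrite pair (μ-η-r, μ-μ) is joinable: the term μ (μ c δ) (λ p, η (Typ (μ c δ) p)) reduces to μ c δ via (μ-η-r), and also, via (μ-μ), the typing rule (Typ-μ), the projection rules for μ-pos, and (μ-η-r) applied inside, reduces to μ c δ; hence the critical pair between right unitality and associativity resolves. -/
/-- Terms of the rewriting system: variables (de Bruijn), `η`, `η`-positions,
`μ`, `Typ`, λ-abstraction, application, and pairing/projections of
`μ`-positions. -/
inductive Tm : Type where
  | var : ℕ → Tm
  | eta : Tm → Tm
  | etaPos : Tm → Tm
  | mu : Tm → Tm → Tm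
  | typ : Tm → Tm → Tm
  | lam : Tm → Tm
  | app : Tm → Tm → Tm
  | pair : Tm → Tm → Tm
  | fst : Tm → Tm
  | snd : Tm → Tm

namespace Tm

/-- Increment the free variables `≥ d`. -/
def liftAux (d : ℕ) : Tm → Tm
  | var n => if n < d then var n else var (n + 1)
  | eta t => eta (liftAux d t)
  | etaPos t => etaPos (liftAux d t)
  | mu t u => mu (liftAux d t) (liftAux d u)
  | typ t u => typ (liftAux d t) (liftAux d u)
  | lam t => lam (liftAux (d + 1) t)
  | app t u => app (liftAux d t) (liftAux d u)
  | pair t u => pair (liftAux d t) (liftAux d u)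
  | fst t => fst (liftAux d t)
  | snd t => snd (liftAux d t)

/-- Weakening: increment all free variables. -/
def lift : Tm → Tm := liftAux 0

/-- Substitute `u` for the variable `d`, lowering the higher variables. -/
def substAux (d : ℕ) (u : Tm) : Tm → Tm
  | var n => if n < d then var n else if n = d then u else var (n - 1)
  | eta t => eta (substAux d u t)
  | etaPos t => etaPos (substAux d u t)
  | mu t v => mu (substAux d u t) (substAux d u v)
  | typ t v => typ (substAux d u t) (substAux d u v)
  | lam t => lam (substAux (d + 1) (lift u) t)
  | app t v => app (substAux d u t) (substAux d u v)
  | pair t v => pair (substAux d u t) (substAux d u v)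
  | fst t => fst (substAux d u t)
  | snd t => snd (substAux d u t)

/-- β-substitution of `u` for the top variable of `b`. -/
def subst (b u : Tm) : Tm := substAux 0 u b

end Tm

open Tm in
/-- One-step reduction: the rewrite rules (Typ-η), (Typ-μ), (μ-pos-fst),
(μ-pos-snd), (μ-pos-η), (μ-η-r), (μ-η-l), (μ-μ), β-reduction, and closure
under congruence. -/
inductive Red : Tm → Tm → Prop where
  | typEta : ∀ i p, Red (typ (eta i) p) i
  | typMu : ∀ c δ p, Red (typ (mu c δ) p) (typ (app δ (fst p)) (snd p))
  | muPosFst : ∀ p q, Red (fst (pair p q)) p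
  | muPosSnd : ∀ p q, Red (snd (pair p q)) q
  | muPosEta : ∀ p, Red (pair (fst p) (snd p)) p
  | muEtaR : ∀ c, Red (mu c (lam (eta (typ (lift c) (var 0))))) c
  | muEtaL : ∀ i δ, Red (mu (eta i) (lam δ)) (subst δ (etaPos i))
  | muMu : ∀ c δ ε,
      Red (mu (mu c δ) ε)
        (mu c (lam (mu (app (lift δ) (var 0))
          (lam (app (lift (lift ε)) (pair (var 1) (var 0)))))))
  | beta : ∀ b u, Red (app (lam b) u) (subst b u)
  | funEta : ∀ t, Red (lam (app (lift t) (var 0))) t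
  | etaCong : ∀ {t t'}, Red t t' → Red (eta t) (eta t')
  | etaPosCong : ∀ {t t'}, Red t t' → Red (etaPos t) (etaPos t')
  | muCongL : ∀ {t t'} u, Red t t' → Red (mu t u) (mu t' u)
  | muCongR : ∀ t {u u'}, Red u u' → Red (mu t u) (mu t u')
  | typCongL : ∀ {t t'} u, Red t t' → Red (typ t u) (typ t' u)
  | typCongR : ∀ t {u u'}, Red u u' → Red (typ t u) (typ t u')
  | lamCong : ∀ {t t'}, Red t t' → Red (lam t) (lam t')
  | appCongL : ∀ {t t'} u, Red t t' → Red (app t u) (app t' u)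
  | appCongR : ∀ t {u u'}, Red u u' → Red (app t u) (app t u')
  | pairCongL : ∀ {t t'} u, Red t t' → Red (pair t u) (pair t' u)
  | pairCongR : ∀ t {u u'}, Red u u' → Red (pair t u) (pair t u')
  | fstCong : ∀ {t t'}, Red t t' → Red (fst t) (fst t')
  | sndCong : ∀ {t t'}, Red t t' → Red (snd t) (snd t')


open Tm in
lemma liftAux_liftAux (t : Tm) : ∀ d e, e ≤ d →
    liftAux (d+1) (liftAux e t) = liftAux e (liftAux d t) := by
  induction t with
  | var n =>
    intro d e h
    simp only [liftAux]
    split_ifs <;> simp only [liftAux] <;> split_ifs <;>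
      simp only [Tm.var.injEq] <;> omega
  | lam t ih => intro d e h; simp [liftAux, ih (d+1) (e+1) (by omega)]
  | _ => intros <;> simp_all [liftAux]

open Tm in
lemma substAux_liftAux (t : Tm) : ∀ d u, substAux d u (liftAux d t) = t := by
  induction t with
  | var n =>
    intro d u
    simp only [liftAux]
    split_ifs <;> simp only [substAux] <;> split_ifs <;>
      first
        | (simp only [Tm.var.injEq]; omega)
        | omega
        | rfl
  | lam t ih => intro d u; simp [liftAux, substAux, ih]
  | _ => intros <;> simp_all [liftAux, substAux]

open Tm in
/-- Joinability of the critical pair between (μ-η-r) and (μ-μ): the term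
`μ (μ c δ) (λ p, η (Typ (μ c δ) p))` reduces to `μ c δ` directly by (μ-η-r),
and its (μ-μ)-reduct also reduces (using β, (Typ-μ), the `μ`-position
projection rules and (μ-η-r)) to `μ c δ`; hence the critical pair between
right unitality and associativity resolves. -/
theorem mu_eta_mu_mu_critical_pair_joinable (c δ : Tm) :
    -- via (μ-η-r) directly
    Red (mu (mu c δ) (lam (eta (typ (lift (mu c δ)) (var 0))))) (mu c δ) ∧
    -- via (μ-μ) ...
    Red (mu (mu c δ) (lam (eta (typ (lift (mu c δ)) (var 0)))))
      (mu c (lam (mu (app (lift δ) (var 0))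
        (lam (app (lift (lift (lam (eta (typ (lift (mu c δ)) (var 0))))))
          (pair (var 1) (var 0))))))) ∧
    -- ... and the (μ-μ)-reduct joins back to `μ c δ`
    Relation.ReflTransGen Red
      (mu c (lam (mu (app (lift δ) (var 0))
        (lam (app (lift (lift (lam (eta (typ (lift (mu c δ)) (var 0))))))
          (pair (var 1) (var 0)))))))
      (mu c δ) := by
  refine ⟨Red.muEtaR (mu c δ), Red.muMu c δ _, ?_⟩
  -- Step 1: β-reduce the inner application
  have h1 : Red
      (mu c (lam (mu (app (lift δ) (var 0))
        (lam (app (lift (lift (lam (eta (typ (lift (mu c δ)) (var 0))))))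
          (pair (var 1) (var 0)))))))
      (mu c (lam (mu (app (lift δ) (var 0))
        (lam (eta (typ (lift (lift (mu c δ))) (pair (var 1) (var 0)))))))) := by
    apply Red.muCongR; apply Red.lamCong; apply Red.muCongR; apply Red.lamCong
    have e1 : lift (lift (lam (eta (typ (lift (mu c δ)) (var 0)))))
        = lam (eta (typ (liftAux 1 (liftAux 1 (liftAux 0 (mu c δ)))) (var 0))) := by
      simp [lift, liftAux]
    have e2 : liftAux 1 (liftAux 1 (liftAux 0 (mu c δ)))
        = liftAux 0 (liftAux 0 (liftAux 0 (mu c δ))) := by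
      rw [liftAux_liftAux (mu c δ) 0 0 le_rfl, liftAux_liftAux (liftAux 0 (mu c δ)) 0 0 le_rfl]
    have e3 : subst (eta (typ (liftAux 1 (liftAux 1 (liftAux 0 (mu c δ)))) (var 0)))
        (pair (var 1) (var 0))
        = eta (typ (lift (lift (mu c δ))) (pair (var 1) (var 0))) := by
      rw [e2]
      simp [subst, substAux, lift, liftAux, substAux_liftAux]
    rw [e1]
    have := Red.beta (eta (typ (liftAux 1 (liftAux 1 (liftAux 0 (mu c δ)))) (var 0)))
      (pair (var 1) (var 0))
    rwa [e3] at this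
  -- Step 2: Typ-μ
  have h2 : Red
      (mu c (lam (mu (app (lift δ) (var 0))
        (lam (eta (typ (lift (lift (mu c δ))) (pair (var 1) (var 0))))))))
      (mu c (lam (mu (app (lift δ) (var 0))
        (lam (eta (typ (app (lift (lift δ)) (fst (pair (var 1) (var 0))))
          (snd (pair (var 1) (var 0))))))))) := by
    apply Red.muCongR; apply Red.lamCong; apply Red.muCongR; apply Red.lamCong
    apply Red.etaCong
    have : lift (lift (mu c δ)) = mu (lift (lift c)) (lift (lift δ)) := by
      simp [lift, liftAux]
    rw [this]
    exact Red.typMu _ _ _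
  -- Step 3: fst of pair
  have h3 : Red
      (mu c (lam (mu (app (lift δ) (var 0))
        (lam (eta (typ (app (lift (lift δ)) (fst (pair (var 1) (var 0))))
          (snd (pair (var 1) (var 0)))))))))
      (mu c (lam (mu (app (lift δ) (var 0))
        (lam (eta (typ (app (lift (lift δ)) (var 1))
          (snd (pair (var 1) (var 0))))))))) := by
    apply Red.muCongR; apply Red.lamCong; apply Red.muCongR; apply Red.lamCong
    apply Red.etaCong; apply Red.typCongL; apply Red.appCongR
    exact Red.muPosFst _ _
  -- Step 4: snd of pair
  have h4 : Red
      (mu c (lam (mu (app (lift δ) (var 0))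
        (lam (eta (typ (app (lift (lift δ)) (var 1))
          (snd (pair (var 1) (var 0)))))))))
      (mu c (lam (mu (app (lift δ) (var 0))
        (lam (eta (typ (app (lift (lift δ)) (var 1)) (var 0))))))) := by
    apply Red.muCongR; apply Red.lamCong; apply Red.muCongR; apply Red.lamCong
    apply Red.etaCong; apply Red.typCongR
    exact Red.muPosSnd _ _
  -- Step 5: μ-η-r inside
  have h5 : Red
      (mu c (lam (mu (app (lift δ) (var 0))
        (lam (eta (typ (app (lift (lift δ)) (var 1)) (var 0)))))))
      (mu c (lam (app (lift δ) (var 0)))) := by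
    apply Red.muCongR; apply Red.lamCong
    have : app (lift (lift δ)) (var 1) = lift (app (lift δ) (var 0)) := by
      have := liftAux_liftAux δ 0 0 le_rfl
      simp [lift, liftAux, this]
    rw [this]
    exact Red.muEtaR _
  -- Step 6: η for functions
  have h6 : Red (mu c (lam (app (lift δ) (var 0)))) (mu c δ) :=
    Red.muCongR _ (Red.funEta δ)
  exact .trans (.trans (.trans (.trans (.trans (.single h1) (.single h2))
    (.single h3)) (.single h4)) (.single h5)) (.single h6)
end

section
/- For a cartesian polynomial monad M and a dependent monad M↓ over it (a fiberwise polynomial with Idx↓, Cns↓, Typ↓ and fiberwise η↓, μ↓ over η, μ), the total polynomial with index type Σ (i : Idx M), Idx↓ M↓ i, constructors Σ (c : Cns M i), Cns↓ M↓ i↓ c, positions Pos M c, and typing (Typ M c p, Typ↓ M↓ c↓ p), together with unit (η M i, η↓ M↓ i↓) and multiplication (μ M c δ, μ↓ M↓ c↓ δ↓), is a polynomial monad, and the first projection is a cartesian morphism of polynomial monads to M. -/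
/-- A dependent monad over a cartesian polynomial monad `M`: fiberwise indices,
constructors and typing, with fiberwise unit and multiplication lying over
those of `M`, satisfying fiberwise typing, unitality and associativity laws. -/
structure DepPM (M : PM) where
  Idxd : M.Idx → Type
  Cnsd : {i : M.Idx} → Idxd i → M.Cns i → Type
  Typd : {i : M.Idx} → {id : Idxd i} → {c : M.Cns i} → Cnsd id c →
    (p : M.Pos c) → Idxd (M.Typ c p)
  etad : {i : M.Idx} → (id : Idxd i) → Cnsd id (M.eta i)
  mud : {i : M.Idx} → {id : Idxd i} → {c : M.Cns i} →
    {δ : (p : M.Pos c) → M.Cns (M.Typ c p)} → (cd : Cnsd id c) →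
    ((p : M.Pos c) → Cnsd (Typd cd p) (δ p)) → Cnsd id (M.mu c δ)
  etaTypd : ∀ {i : M.Idx} (id : Idxd i) (p : M.Pos (M.eta i)),
    HEq (Typd (etad id) p) id
  muTypd : ∀ {i : M.Idx} {id : Idxd i} {c : M.Cns i}
    {δ : (p : M.Pos c) → M.Cns (M.Typ c p)} (cd : Cnsd id c)
    (δd : (p : M.Pos c) → Cnsd (Typd cd p) (δ p)) (p : M.Pos (M.mu c δ)),
    HEq (Typd (mud cd δd) p) (Typd (δd (M.muFst c δ p)) (M.muSnd c δ p))
  unitRd : ∀ {i : M.Idx} {id : Idxd i} {c : M.Cns i} (cd : Cnsd id c),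
    HEq (mud cd (fun p => etad (Typd cd p))) cd
  unitLd : ∀ {i : M.Idx} (id : Idxd i)
    {δ : (p : M.Pos (M.eta i)) → M.Cns (M.Typ (M.eta i) p)}
    (δd : (p : M.Pos (M.eta i)) → Cnsd (Typd (etad id) p) (δ p)),
    HEq (mud (etad id) δd) (δd (M.etaPos i))
  assocd : ∀ {i : M.Idx} {id : Idxd i} {c : M.Cns i}
    {δ : (p : M.Pos c) → M.Cns (M.Typ c p)}
    {ε : (p : M.Pos (M.mu c δ)) → M.Cns (M.Typ (M.mu c δ) p)}
    (cd : Cnsd id c) (δd : (p : M.Pos c) → Cnsd (Typd cd p) (δ p))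
    (εd : (p : M.Pos (M.mu c δ)) → Cnsd (Typd (mud cd δd) p) (ε p))
    (εd' : (p : M.Pos c) → (q : M.Pos (δ p)) →
      Cnsd (Typd (δd p) q)
        (cast (congrArg M.Cns (M.muPosTyp c δ p q)) (ε (M.muPos c δ p q))))
    (_ : ∀ (p : M.Pos c) (q : M.Pos (δ p)), HEq (εd' p q) (εd (M.muPos c δ p q))),
    HEq (mud (mud cd δd) εd) (mud cd (fun p => mud (δd p) (εd' p)))

section Total

variable (M : PM) (D : DepPM M)

/-- Indices of the total monad of a dependent monad. -/
def TotIdx : Type := Σ i : M.Idx, D.Idxd i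

/-- Constructors of the total monad. -/
def TotCns (ix : TotIdx M D) : Type := Σ c : M.Cns ix.1, D.Cnsd ix.2 c

/-- Positions of the total monad: the positions of the underlying constructor. -/
def TotPos {ix : TotIdx M D} (c : TotCns M D ix) : Type := M.Pos c.1

/-- Typing of the total monad. -/
def TotTyp {ix : TotIdx M D} (c : TotCns M D ix) (p : TotPos M D c) : TotIdx M D :=
  ⟨M.Typ c.1 p, D.Typd c.2 p⟩

/-- Unit of the total monad. -/
def TotEta (ix : TotIdx M D) : TotCns M D ix := ⟨M.eta ix.1, D.etad ix.2⟩

/-- Multiplication of the total monad. -/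
def TotMu {ix : TotIdx M D} (c : TotCns M D ix)
    (δ : (p : TotPos M D c) → TotCns M D (TotTyp M D c p)) : TotCns M D ix :=
  ⟨M.mu c.1 (fun p => (δ p).1), D.mud c.2 (fun p => (δ p).2)⟩

end Total


section Aux
variable (M : PM) (D : DepPM M)

lemma tot_heq {ix ix' : TotIdx M D} (e : ix = ix') {x : TotCns M D ix}
    {y : TotCns M D ix'} (h1 : HEq x.1 y.1) (h2 : HEq x.2 y.2) : HEq x y := by
  subst e
  exact heq_of_eq (Sigma.ext (eq_of_heq h1) h2)

lemma cast_tot_fst {ix ix' : TotIdx M D} (e : ix = ix') (x : TotCns M D ix)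
    (e1 : ix.1 = ix'.1) :
    (cast (congrArg (TotCns M D) e) x).1 = cast (congrArg M.Cns e1) x.1 := by
  subst e; rfl

lemma cast_tot_snd {ix ix' : TotIdx M D} (e : ix = ix') (x : TotCns M D ix) :
    HEq (cast (congrArg (TotCns M D) e) x).2 x.2 := by
  subst e; rfl

lemma mud_congr {i : M.Idx} {id : D.Idxd i} {c : M.Cns i} (cd : D.Cnsd id c)
    {δ δ' : (p : M.Pos c) → M.Cns (M.Typ c p)} (hδ : δ = δ')
    {f : (p : M.Pos c) → D.Cnsd (D.Typd cd p) (δ p)}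
    {f' : (p : M.Pos c) → D.Cnsd (D.Typd cd p) (δ' p)}
    (hf : ∀ p, HEq (f p) (f' p)) :
    HEq (D.mud cd f) (D.mud cd f') := by
  subst hδ
  have : f = f' := funext fun p => eq_of_heq (hf p)
  subst this
  rfl

end Aux

/-- The total polynomial of a dependent monad `D` over a cartesian polynomial
monad `M` (with indices `Σ i, Idx↓ i`, constructors `Σ c, Cns↓ i↓ c`,
positions those of the underlying constructor, and fiberwise unit and
multiplication) is a polynomial monad — it satisfies left unitality, right
unitality and associativity — and the first projection is a cartesian
morphism of polynomial monads to `M`: it maps indices, constructors, unit and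
multiplication to those of `M`, and is a bijection (indeed the identity) on
positions. -/
theorem total_monad_and_cartesian_projection (M : PM) (D : DepPM M) :
    -- left unitality
    (∀ (ix : TotIdx M D)
      (δ : (p : TotPos M D (TotEta M D ix)) → TotCns M D (TotTyp M D (TotEta M D ix) p)),
      HEq (TotMu M D (TotEta M D ix) δ) (δ (M.etaPos ix.1))) ∧
    -- right unitality
    (∀ (ix : TotIdx M D) (c : TotCns M D ix),
      TotMu M D c (fun p => TotEta M D (TotTyp M D c p)) = c) ∧
    -- associativity
    (∀ (ix : TotIdx M D) (c : TotCns M D ix)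
      (δ : (p : TotPos M D c) → TotCns M D (TotTyp M D c p))
      (ε : (p : TotPos M D (TotMu M D c δ)) → TotCns M D (TotTyp M D (TotMu M D c δ) p))
      (h : ∀ (p : TotPos M D c) (q : TotPos M D (δ p)),
        TotTyp M D (TotMu M D c δ) (M.muPos c.1 (fun r => (δ r).1) p q) =
          TotTyp M D (δ p) q),
      TotMu M D (TotMu M D c δ) ε =
        TotMu M D c (fun p => TotMu M D (δ p)
          (fun q => cast (congrArg (TotCns M D) (h p q))
            (ε (M.muPos c.1 (fun r => (δ r).1) p q))))) ∧
    -- the projection preserves the unit ...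
    (∀ (ix : TotIdx M D), (TotEta M D ix).1 = M.eta ix.1) ∧
    -- ... the multiplication ...
    (∀ (ix : TotIdx M D) (c : TotCns M D ix)
      (δ : (p : TotPos M D c) → TotCns M D (TotTyp M D c p)),
      (TotMu M D c δ).1 = M.mu c.1 (fun p => (δ p).1)) ∧
    -- ... the typing, on the underlying indices ...
    (∀ (ix : TotIdx M D) (c : TotCns M D ix) (p : TotPos M D c),
      (TotTyp M D c p).1 = M.Typ c.1 p) ∧
    -- ... and is a bijection on positions (the identity)
    (∀ (ix : TotIdx M D) (c : TotCns M D ix), TotPos M D c = M.Pos c.1) := by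
  
  refine ⟨?_, ?_, ?_, fun ix => rfl, fun ix c δ => rfl, fun ix c p => rfl,
    fun ix c => rfl⟩
  · -- left unitality
    intro ix δ
    refine (tot_heq M D ?_ ?_ ?_).symm
    · exact Sigma.ext (M.etaTyp ix.1 (M.etaPos ix.1)) (D.etaTypd ix.2 (M.etaPos ix.1))
    · exact (M.unitL ix.1 (fun p => (δ p).1)).symm
    · exact (D.unitLd ix.2 (fun p => (δ p).2)).symm
  · -- right unitality
    intro ix c
    exact Sigma.ext (M.unitR c.1) (D.unitRd c.2)
  · -- associativity
    intro ix c δ ε h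
    have hm : ∀ (p : M.Pos c.1) (q : M.Pos ((δ p).1)),
        M.Typ (M.mu c.1 (fun r => (δ r).1)) (M.muPos c.1 (fun r => (δ r).1) p q)
          = M.Typ ((δ p).1) q :=
      fun p q => M.muPosTyp c.1 (fun r => (δ r).1) p q
    have eE : ∀ (p : M.Pos c.1) (q : M.Pos ((δ p).1)),
        (cast (congrArg (TotCns M D) (h p q))
            (ε (M.muPos c.1 (fun r => (δ r).1) p q))).1
          = cast (congrArg M.Cns (hm p q))
            ((ε (M.muPos c.1 (fun r => (δ r).1) p q)).1) :=
      fun p q => cast_tot_fst M D (h p q) _ (hm p q)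
    refine Sigma.ext ?_ ?_
    · -- first components
      have := M.assoc c.1 (fun r => (δ r).1) (fun p => (ε p).1) hm
      refine this.trans ?_
      congr 1
      funext p
      congr 1
      funext q
      exact (eE p q).symm
    · -- second components
      refine HEq.trans (D.assocd c.2 (fun p => (δ p).2) (fun p => (ε p).2)
        (fun p q => cast (congrArg (D.Cnsd (D.Typd (δ p).2 q)) (eE p q))
          (cast (congrArg (TotCns M D) (h p q))
            (ε (M.muPos c.1 (fun r => (δ r).1) p q))).2)
        (fun p q => HEq.trans (cast_heq _ _)
          (cast_tot_snd M D (h p q) _))) ?_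
      refine mud_congr M D c.2 ?_ ?_
      · funext p
        congr 1
        funext q
        exact (eE p q).symm
      · intro p
        refine mud_congr M D (δ p).2 ?_ ?_
        · funext q
          exact (eE p q).symm
        · intro q
          exact cast_heq _ _
end
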